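/- arXiv:2201.04046 — 3 statements merged into one kernel-verified Lean document; each statement's English description precedes it below -/
import Mathlib

section
/- The group GL₂(Ẑ), where Ẑ is the profinite completion of ℤ, contains no abelian subgroup of finite index. -/
/-- The profinite completion `Ẑ = lim_N ℤ/Nℤ`, realised as the subring of compatible
sequences in `Π_N ℤ/Nℤ`. -/
def ZHatSubring : Subring (∀ n : ℕ+, ZMod n) where
  carrier := {f | ∀ (m n : ℕ+) (h : (m : ℕ) ∣ (n : ℕ)), ZMod.castHom h (ZMod m) (f n) = f m}
  zero_mem' := by intro m n h; simp
  one_mem' := by intro m n h; exact map_one _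
  add_mem' := by intro f g hf hg m n h; simp [map_add, hf m n h, hg m n h]
  mul_mem' := by intro f g hf hg m n h; simp [map_mul, hf m n h, hg m n h]
  neg_mem' := by intro f hf m n h; simp [map_neg, hf m n h]

section aux

variable {R : Type*} [CommRing R]

lemma aux_upow (n : ℕ) : (!![1,1;0,1] : Matrix (Fin 2) (Fin 2) R) ^ n = !![1,(n:R);0,1] := by
  induction n with
  | zero => simp [Matrix.one_fin_two]
  | succ k ih =>
    rw [pow_succ, ih, Matrix.mul_fin_two]
    push_cast
    congr 1 <;> ring

lemma aux_lpow (n : ℕ) : (!![1,0;1,1] : Matrix (Fin 2) (Fin 2) R) ^ n = !![1,0;(n:R),1] := by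
  induction n with
  | zero => simp [Matrix.one_fin_two]
  | succ k ih =>
    rw [pow_succ, ih, Matrix.mul_fin_two]
    push_cast
    congr 1 <;> ring

/-- The upper unipotent element of GL₂. -/
def auxU : GL (Fin 2) R :=
  ⟨!![1,1;0,1], !![1,-1;0,1],
    by rw [Matrix.mul_fin_two]; simp [Matrix.one_fin_two],
    by rw [Matrix.mul_fin_two]; simp [Matrix.one_fin_two]⟩

/-- The lower unipotent element of GL₂. -/
def auxL : GL (Fin 2) R :=
  ⟨!![1,0;1,1], !![1,0;-1,1],
    by rw [Matrix.mul_fin_two]; simp [Matrix.one_fin_two],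
    by rw [Matrix.mul_fin_two]; simp [Matrix.one_fin_two]⟩

end aux

/-- A natural number `N ≥ 1` is nonzero in `ZHatSubring`. -/
lemma aux_natCast_ne_zero (N : ℕ) (hN : N ≠ 0) : (N : ZHatSubring) ≠ 0 := by
  intro h
  have h2 : ((N : ZHatSubring) : ∀ n : ℕ+, ZMod n) = 0 := by rw [h]; rfl
  have h3 : ((N : ZHatSubring) : ∀ n : ℕ+, ZMod n) = (N : ∀ n : ℕ+, ZMod n) :=
    map_natCast ZHatSubring.subtype N
  rw [h3] at h2
  have h4 : (N : ZMod ((⟨N+1, Nat.succ_pos N⟩ : ℕ+) : ℕ)) = 0 := by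
    have := congrFun h2 ⟨N+1, Nat.succ_pos N⟩
    exact this
  rw [ZMod.natCast_eq_zero_iff] at h4
  have h5 : N + 1 ≤ N := Nat.le_of_dvd (Nat.pos_of_ne_zero hN) h4
  omega

/-- `GL₂(Ẑ)` contains no abelian subgroup of finite index. -/
theorem no_finite_index_abelian_subgroup_GL2_ZHat
    (H : Subgroup (GL (Fin 2) ZHatSubring))
    (habelian : ∀ x ∈ H, ∀ y ∈ H, x * y = y * x) :
    ¬ H.FiniteIndex := by
  intro hfi
  set N := H.normalCore
  have hfiN : N.FiniteIndex := Subgroup.finiteIndex_normalCore H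
  have hle : N ≤ H := Subgroup.normalCore_le H
  set n := N.index with hn
  have hn0 : n ≠ 0 := hfiN.index_ne_zero
  -- powers of the unipotents lie in N
  have hU : (auxU : GL (Fin 2) ZHatSubring) ^ n ∈ N := Subgroup.pow_index_mem N auxU
  have hL : (auxL : GL (Fin 2) ZHatSubring) ^ n ∈ N := Subgroup.pow_index_mem N auxL
  have hcomm := habelian _ (hle hU) _ (hle hL)
  -- pass to matrices
  have hmat : ((auxU : GL (Fin 2) ZHatSubring) ^ n).val * ((auxL : GL (Fin 2) ZHatSubring) ^ n).val
      = ((auxL : GL (Fin 2) ZHatSubring) ^ n).val * ((auxU : GL (Fin 2) ZHatSubring) ^ n).val := by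
    rw [← Units.val_mul, ← Units.val_mul, hcomm]
  have hUv : ((auxU : GL (Fin 2) ZHatSubring) ^ n).val = !![1,(n:ZHatSubring);0,1] := by
    rw [Units.val_pow_eq_pow_val]
    exact aux_upow n
  have hLv : ((auxL : GL (Fin 2) ZHatSubring) ^ n).val = !![1,0;(n:ZHatSubring),1] := by
    rw [Units.val_pow_eq_pow_val]
    exact aux_lpow n
  rw [hUv, hLv, Matrix.mul_fin_two, Matrix.mul_fin_two] at hmat
  have h00 : (1 : ZHatSubring) * 1 + (n : ZHatSubring) * n = 1 * 1 + 0 * 0 :=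
    congrFun (congrFun hmat 0) 0
  have hnn : ((n : ZHatSubring) * n) = 0 := by linear_combination h00
  have : ((n * n : ℕ) : ZHatSubring) = 0 := by push_cast; exact hnn
  exact aux_natCast_ne_zero (n * n) (Nat.mul_ne_zero hn0 hn0) this
end

section
/- Let K ⊆ F ⊆ L be a tower of fields inside a fixed algebraic closure, with K ⊆ L finite, and let K^ab be a (possibly infinite) abelian extension of K in the same algebraic closure. Then [L·K^ab : F·K^ab] = [L : F] · [F ∩ K^ab : K] / [L ∩ K^ab : K]. -/
open Module IntermediateField Polynomial
set_option maxHeartbeats 1000000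
set_option synthInstance.maxHeartbeats 400000

section Keyabs

variable {K N : Type*} [Field K] [Field N] [Algebra K N]

theorem my_isGalois_top [FiniteDimensional K N]
    (L M : IntermediateField K N) [IsGalois K ↥M] (hsup : L ⊔ M = ⊤) :
    IsGalois ↥L N := by
  classical
  haveI : FiniteDimensional K ↥M :=
    FiniteDimensional.of_injective M.val.toLinearMap M.val.injective
  haveI : FiniteDimensional K ↥L :=
    FiniteDimensional.of_injective L.val.toLinearMap L.val.injective
  obtain ⟨p, hp, hsp⟩ := IsGalois.is_separable_splitting_field K (↥M)
  have hsplits : Splits ((p.map (algebraMap K ↥L)).map (algebraMap (↥L) N)) := by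
    rw [Polynomial.map_map, ← IsScalarTower.algebraMap_eq, IsScalarTower.algebraMap_eq K (↥M) N,
      ← Polynomial.map_map]
    exact hsp.splits'.map _
  have hroot : (p.map (algebraMap K ↥L)).rootSet N = p.rootSet N := by
    unfold Polynomial.rootSet
    rw [Polynomial.aroots_def, Polynomial.aroots_def, Polynomial.map_map,
      ← IsScalarTower.algebraMap_eq]
  have hadj : Algebra.adjoin (↥L) ((p.map (algebraMap K ↥L)).rootSet N) = ⊤ := by
    rw [hroot]
    set A := Algebra.adjoin (↥L) (p.rootSet N) with hA
    have hMsub : M.toSubalgebra ≤ A.restrictScalars K := by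
      have h1 : (Algebra.adjoin K (p.rootSet ↥M)).map M.val =
          Algebra.adjoin K (M.val '' (p.rootSet ↥M)) := AlgHom.map_adjoin _ _
      have h2 : (⊤ : Subalgebra K ↥M).map M.val = M.toSubalgebra := by
        rw [Algebra.map_top, ← M.range_val]
      rw [← h2, ← hsp.adjoin_rootSet', h1]
      have himg : M.val '' (p.rootSet ↥M) ⊆ p.rootSet N := by
        rintro _ ⟨y, hy, rfl⟩
        rw [Polynomial.mem_rootSet] at hy ⊢
        exact ⟨hy.1, by rw [Polynomial.aeval_algHom_apply, hy.2, map_zero]⟩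
      refine (Algebra.adjoin_le ?_)
      refine himg.trans ?_
      intro x hx
      exact (Subalgebra.mem_restrictScalars K).mpr (Algebra.subset_adjoin hx)
    have hLsub : L.toSubalgebra ≤ A.restrictScalars K := by
      intro x hx
      exact (Subalgebra.mem_restrictScalars K).mpr (A.algebraMap_mem (⟨x, hx⟩ : ↥L))
    have hsupalg : (A.restrictScalars K) = ⊤ := by
      rw [eq_top_iff]
      have h1 : (L ⊔ M).toSubalgebra = L.toSubalgebra ⊔ M.toSubalgebra :=
        sup_toSubalgebra_of_left L M
      rw [hsup] at h1
      rw [IntermediateField.top_toSubalgebra] at h1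
      rw [h1]
      exact sup_le hLsub hMsub
    rw [eq_top_iff]
    intro x _
    have : x ∈ A.restrictScalars K := hsupalg ▸ trivial
    rwa [Subalgebra.mem_restrictScalars] at this
  haveI : IsSplittingField (↥L) N (p.map (algebraMap K ↥L)) := ⟨hsplits, hadj⟩
  exact IsGalois.of_separable_splitting_field (p := p.map (algebraMap K ↥L)) (hp.map)


theorem my_keyabs [FiniteDimensional K N]
    (L M : IntermediateField K N) [IsGalois K ↥M] (hsup : L ⊔ M = ⊤)
    (hGal : IsGalois ↥L N) :
    finrank ↥L N = relfinrank L M := by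
  classical
  haveI : FiniteDimensional K ↥M :=
    FiniteDimensional.of_injective M.val.toLinearMap M.val.injective
  haveI : FiniteDimensional K ↥L :=
    FiniteDimensional.of_injective L.val.toLinearMap L.val.injective
  haveI : FiniteDimensional ↥L N := FiniteDimensional.right K ↥L N
  -- restriction map
  let ρ : (N ≃ₐ[↥L] N) →* (↥M ≃ₐ[K] ↥M) :=
    (AlgEquiv.restrictNormalHom (F := K) (K₁ := N) ↥M).comp
      (MonoidHom.mk' (fun σ => (σ.restrictScalars K : N ≃ₐ[K] N)) (fun _ _ => rfl))
  have hcomm : ∀ (σ : N ≃ₐ[↥L] N) (x : ↥M), ((ρ σ x : ↥M) : N) = σ (x : N) := by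
    intro σ x
    exact AlgEquiv.restrictNormal_commutes (σ.restrictScalars K) ↥M x
  -- sup fact as subalgebras
  have hsupalg : (L.toSubalgebra ⊔ M.toSubalgebra) = ⊤ := by
    have h1 : (L ⊔ M).toSubalgebra = L.toSubalgebra ⊔ M.toSubalgebra :=
      sup_toSubalgebra_of_left L M
    rw [hsup, IntermediateField.top_toSubalgebra] at h1
    exact h1.symm
  -- injectivity
  have hinj : Function.Injective ρ := by
    rw [injective_iff_map_eq_one]
    intro σ hσ
    have hfix : ∀ x : N, σ x = x := by
      intro x
      have : x ∈ (⊤ : Subalgebra K N) := trivial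
      rw [← hsupalg] at this
      have hEq : L.toSubalgebra ⊔ M.toSubalgebra ≤
          AlgHom.equalizer ((σ.restrictScalars K : N ≃ₐ[K] N) : N →ₐ[K] N)
            (AlgHom.id K N) := by
        apply sup_le
        · intro y hy
          have : σ (algebraMap ↥L N ⟨y, hy⟩) = algebraMap ↥L N ⟨y, hy⟩ :=
            σ.commutes _
          exact this
        · intro y hy
          have h1 : ((ρ σ ⟨y, hy⟩ : ↥M) : N) = σ y := hcomm σ ⟨y, hy⟩
          rw [hσ] at h1
          exact h1.symm
      exact hEq this
    exact AlgEquiv.ext hfix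
  -- fixed field of range
  have hfixed : fixedField (ρ.range) = L.comap M.val := by
    apply le_antisymm
    · intro x hx
      have hx' : ∀ σ : N ≃ₐ[↥L] N, σ (x : N) = (x : N) := by
        intro σ
        have h2 : ρ σ x = x := hx ⟨ρ σ, σ, rfl⟩
        calc σ (x : N) = ((ρ σ x : ↥M) : N) := (hcomm σ x).symm
          _ = (x : N) := by rw [h2]
      have hbot : (x : N) ∈ (⊥ : IntermediateField ↥L N) := by
        haveI := hGal
        rw [← IsGalois.fixedField_fixingSubgroup (⊥ : IntermediateField ↥L N)]
        intro g
        exact hx' g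
      rw [IntermediateField.mem_bot] at hbot
      obtain ⟨l, hl⟩ := hbot
      have h3 : (x : N) ∈ L := by
        rw [← hl]
        simp only [IntermediateField.algebraMap_apply]
        exact l.2
      exact h3
    · rw [IntermediateField.le_iff_le]
      rintro τ ⟨σ, rfl⟩
      intro y
      have hy : (y : ↥M) ∈ comap M.val L := y.2
      have hyL : ((y : ↥M) : N) ∈ L := hy
      have hfix : σ ((y : ↥M) : N) = ((y : ↥M) : N) := σ.commutes ⟨(y : N), hyL⟩
      show ρ σ • (y : ↥M) = (y : ↥M)
      rw [AlgEquiv.smul_def]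
      apply Subtype.ext
      calc ((ρ σ (y : ↥M) : ↥M) : N) = σ ((y : ↥M) : N) := hcomm σ (y : ↥M)
        _ = ((y : ↥M) : N) := hfix
  -- counting
  have hcard1 : Fintype.card (N ≃ₐ[↥L] N) = Fintype.card ρ.range := by
    apply Fintype.card_congr
    exact (Equiv.ofInjective ρ hinj).trans
      (Equiv.subtypeEquivRight (fun g => Iff.rfl))
  rw [← Nat.card_eq_fintype_card, IsGalois.card_aut_eq_finrank (F := ↥L) (E := N)] at hcard1
  have hcard2 : finrank ↥(fixedField ρ.range) ↥M = Fintype.card ρ.range := by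
    have h := finrank_fixedField_eq_card (F := K) (E := ↥M) ρ.range
    rw [h, Nat.card_eq_fintype_card]
  rw [hfixed] at hcard2
  rw [hcard1, ← hcard2, finrank_comap, IntermediateField.fieldRange_val]

end Keyabs

section LemE

variable {K Ω : Type*} [Field K] [Field Ω] [Algebra K Ω]

theorem my_lemE (L M : IntermediateField K Ω) [FiniteDimensional K L]
    [FiniteDimensional K M] [IsGalois K ↥M] :
    relfinrank M (L ⊔ M) * finrank K ↥(L ⊓ M) = finrank K ↥L := by
  classical
  haveI : FiniteDimensional K ↥(L ⊔ M) := finiteDimensional_sup L M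
  set f := (L ⊔ M).val with hf
  have hrange : f.fieldRange = L ⊔ M := fieldRange_val _
  have hML : M ≤ f.fieldRange := by rw [hrange]; exact le_sup_right
  have hLL : L ≤ f.fieldRange := by rw [hrange]; exact le_sup_left
  set L' := L.comap f with hL'
  set M' := M.comap f with hM'
  have hsup' : L' ⊔ M' = ⊤ := by
    apply map_injective f
    rw [IntermediateField.map_sup, map_comap_eq_self hLL, map_comap_eq_self hML, ← AlgHom.fieldRange_eq_map,
      hrange]
  haveI : IsGalois K ↥M' := by
    have h1 : M'.map f = M := map_comap_eq_self hML
    exact IsGalois.of_algEquiv (((equivMap M' f).trans (equivOfEq h1)).symm)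
  have h1 : finrank ↥L' ↥(L ⊔ M) = relfinrank L' M' :=
    my_keyabs L' M' hsup' (my_isGalois_top L' M' hsup')
  have h2 : relfinrank L' M' = relfinrank L M :=
    relfinrank_comap_comap_eq_relfinrank_of_le (A := L) (B := M) f hML
  have h3 : finrank ↥L' ↥(L ⊔ M) = relfinrank L (L ⊔ M) := by
    rw [finrank_comap, hrange]
  have key : relfinrank L (L ⊔ M) = relfinrank (L ⊓ M) M := by
    rw [← h3, h1, h2, ← inf_relfinrank_right]
  have A2 : relfinrank (L ⊓ M) L * relfinrank L (L ⊔ M) = relfinrank (L ⊓ M) (L ⊔ M) :=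
    relfinrank_mul_relfinrank inf_le_left le_sup_left
  have A3 : relfinrank (L ⊓ M) M * relfinrank M (L ⊔ M) = relfinrank (L ⊓ M) (L ⊔ M) :=
    relfinrank_mul_relfinrank inf_le_right le_sup_right
  have hvM : finrank K ↥(L ⊓ M) * relfinrank (L ⊓ M) M = finrank K ↥M :=
    finrank_bot_mul_relfinrank inf_le_right
  have hvL : finrank K ↥(L ⊓ M) * relfinrank (L ⊓ M) L = finrank K ↥L :=
    finrank_bot_mul_relfinrank inf_le_left
  have hvne : relfinrank (L ⊓ M) M ≠ 0 := by
    intro h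
    rw [h, mul_zero] at hvM
    exact (Module.finrank_pos (R := K) (M := ↥M)).ne' hvM.symm
  have hXu : relfinrank M (L ⊔ M) = relfinrank (L ⊓ M) L := by
    have := A3.trans A2.symm
    rw [key] at A2
    have h4 : relfinrank (L ⊓ M) M * relfinrank M (L ⊔ M)
        = relfinrank (L ⊓ M) M * relfinrank (L ⊓ M) L := by
      rw [A3, ← A2, mul_comm]
    exact Nat.eq_of_mul_eq_mul_left (Nat.pos_of_ne_zero hvne) h4
  rw [hXu, mul_comm, hvL]

end LemE


section Span

variable {K Ω : Type*} [Field K] [Field Ω] [Algebra K Ω]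

theorem my_span_sup (L B : IntermediateField K Ω) [FiniteDimensional K L] :
    ((L ⊔ B : IntermediateField K Ω) : Set Ω) ⊆ (Submodule.span ↥B (L : Set Ω) : Set Ω) := by
  set S := Submodule.span (↥B) (L : Set Ω) with hS
  have hmul : ∀ x ∈ S, ∀ y ∈ S, x * y ∈ S := by
    intro x hx y hy
    have h1 : S * S ≤ S := by
      rw [hS, Submodule.span_mul_span]
      apply Submodule.span_le.2
      intro z hz
      obtain ⟨a, ha, b, hb, rfl⟩ := hz
      exact Submodule.subset_span (mul_mem ha hb)
    exact h1 (Submodule.mul_mem_mul hx hy)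
  have hone : (1 : Ω) ∈ S := Submodule.subset_span (one_mem L)
  have halg : ∀ k : K, algebraMap K Ω k ∈ S := by
    intro k
    have h1 : algebraMap K Ω k = (algebraMap K ↥B k : ↥B) • (1 : Ω) := by
      rw [Algebra.smul_def, mul_one, ← IsScalarTower.algebraMap_apply]
    rw [h1]
    exact S.smul_mem _ hone
  let P : Subalgebra K Ω :=
    { carrier := (S : Set Ω)
      mul_mem' := fun {a b} ha hb => hmul a ha b hb
      one_mem' := hone
      add_mem' := fun {a b} ha hb => S.add_mem ha hb
      algebraMap_mem' := halg }
  have hsub : (L ⊔ B).toSubalgebra ≤ P := by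
    rw [sup_toSubalgebra_of_left]
    apply sup_le
    · intro x hx
      exact Submodule.subset_span hx
    · intro x hx
      have h2 : x = ((⟨x, hx⟩ : ↥B) : ↥B) • (1 : Ω) := by
        rw [Algebra.smul_def, mul_one]
        rfl
      rw [h2]
      exact S.smul_mem _ hone
  exact fun x hx => hsub hx

theorem my_span_mono_base {E B : IntermediateField K Ω} (hEB : E ≤ B) (s : Set Ω) :
    (Submodule.span ↥E s : Set Ω) ⊆ (Submodule.span ↥B s : Set Ω) := by
  intro x hx
  induction hx using Submodule.span_induction with
  | mem y hy => exact Submodule.subset_span hy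
  | zero => exact (Submodule.span ↥B s).zero_mem
  | add y z _ _ hy hz => exact (Submodule.span ↥B s).add_mem hy hz
  | smul c y _ hy =>
    have h1 : c • y = ((⟨(c : Ω), hEB c.2⟩ : ↥B) : ↥B) • y := by
      rw [Algebra.smul_def, Algebra.smul_def]
      rfl
    rw [h1]
    exact (Submodule.span ↥B s).smul_mem _ hy

theorem my_span_family {E L B : IntermediateField K Ω} [FiniteDimensional K L]
    (hEB : E ≤ B) {ι : Type*} (v : ι → Ω)
    (hspan : (L : Set Ω) ⊆ (Submodule.span ↥E (Set.range v) : Set Ω)) :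
    ((L ⊔ B : IntermediateField K Ω) : Set Ω) ⊆
      (Submodule.span ↥B (Set.range v) : Set Ω) := by
  intro x hx
  have h1 := my_span_sup L B hx
  have h2 : Submodule.span ↥B (L : Set Ω) ≤ Submodule.span ↥B (Set.range v) := by
    rw [Submodule.span_le]
    exact fun y hy => my_span_mono_base hEB _ (hspan hy)
  exact h2 h1

theorem my_exists_basis_family (E L : IntermediateField K Ω) [FiniteDimensional K L]
    (hEL : E ≤ L) :
    ∃ (d : ℕ) (v : Fin d → Ω), (∀ i, v i ∈ L) ∧
      ((L : Set Ω) ⊆ (Submodule.span ↥E (Set.range v) : Set Ω)) ∧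
      finrank K ↥E * d = finrank K ↥L := by
  letI : Algebra ↥E ↥L := (inclusion hEL).toRingHom.toAlgebra
  haveI : IsScalarTower K ↥E ↥L := IsScalarTower.of_algebraMap_eq (fun k => rfl)
  haveI : FiniteDimensional ↥E ↥L := FiniteDimensional.right K ↥E ↥L
  set d := finrank ↥E ↥L with hd
  let b : Basis (Fin d) ↥E ↥L := Module.finBasis ↥E ↥L
  refine ⟨d, fun i => ((b i : ↥L) : Ω), fun i => (b i).2, ?_, Module.finrank_mul_finrank K ↥E ↥L⟩
  intro x hx
  have hmem : (⟨x, hx⟩ : ↥L) ∈ (⊤ : Submodule ↥E ↥L) := trivial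
  rw [← b.span_eq] at hmem
  let φ : ↥L →ₗ[↥E] Ω :=
    { toFun := fun y => (y : Ω)
      map_add' := fun _ _ => rfl
      map_smul' := fun c y => by
        show ((c • y : ↥L) : Ω) = c • (y : Ω)
        rw [Algebra.smul_def, Algebra.smul_def]
        rfl }
  have h2 := Submodule.mem_map_of_mem (f := φ) hmem
  rw [Submodule.map_span] at h2
  have himg : φ '' Set.range b = Set.range (fun i => ((b i : ↥L) : Ω)) := by
    rw [← Set.range_comp]
    rfl
  rwa [himg] at h2

theorem my_fg (E : IntermediateField K Ω) [FiniteDimensional K ↥E] :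
    ∃ s : Set Ω, s.Finite ∧ s ⊆ (E : Set Ω) ∧ adjoin K s = E := by
  let b : Basis (Fin (finrank K ↥E)) K ↥E := Module.finBasis K ↥E
  set s : Set Ω := Set.range (fun i => ((b i : ↥E) : Ω)) with hs
  have hsE : s ⊆ (E : Set Ω) := by
    rintro x ⟨i, rfl⟩
    exact (b i).2
  refine ⟨s, Set.finite_range _, hsE, le_antisymm (adjoin_le_iff.2 hsE) ?_⟩
  intro x hx
  have hmem : (⟨x, hx⟩ : ↥E) ∈ (⊤ : Submodule K ↥E) := trivial
  rw [← b.span_eq] at hmem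
  have h2 := Submodule.mem_map_of_mem (f := E.val.toLinearMap) hmem
  rw [Submodule.map_span] at h2
  have himg : E.val.toLinearMap '' Set.range b = s := by
    rw [← Set.range_comp]
    rfl
  rw [himg] at h2
  have h3 : Submodule.span K s ≤ Subalgebra.toSubmodule (adjoin K s).toSubalgebra :=
    Submodule.span_le.2 (subset_adjoin K s)
  exact h3 h2

end Span


section LemA

variable {K Ω : Type*} [Field K] [Field Ω] [Algebra K Ω]

theorem my_lemA (L Kab : IntermediateField K Ω) [FiniteDimensional K L]
    [IsGalois K ↥Kab] :
    relfinrank Kab (L ⊔ Kab) * finrank K ↥(L ⊓ Kab) = finrank K ↥L := by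
  classical
  set E := L ⊓ Kab with hE
  haveI : FiniteDimensional K ↥E :=
    FiniteDimensional.of_injective (inclusion (inf_le_left : E ≤ L)).toLinearMap
      (inclusion (inf_le_left : E ≤ L)).injective
  obtain ⟨d, v, hvL, hspanE, hdim⟩ := my_exists_basis_family E L inf_le_left
  set W := extendScalars (le_sup_right : Kab ≤ L ⊔ Kab) with hW
  have hn : relfinrank Kab (L ⊔ Kab) = finrank ↥Kab ↥W :=
    relfinrank_eq_finrank_of_le le_sup_right
  have hvW : ∀ i, v i ∈ W := fun i => (le_sup_left : L ≤ L ⊔ Kab) (hvL i)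
  set w : Fin d → ↥W := fun i => ⟨v i, hvW i⟩ with hw
  have hrv : Set.range v = W.val.toLinearMap '' Set.range w := by
    rw [← Set.range_comp]
    rfl
  have hwspan : Submodule.span ↥Kab (Set.range w) = ⊤ := by
    rw [eq_top_iff]
    intro x _
    have hxmem : (x : Ω) ∈ (↑(L ⊔ Kab) : Set Ω) := x.2
    have hx : (x : Ω) ∈ Submodule.span ↥Kab (Set.range v) :=
      my_span_family (E := E) (B := Kab) inf_le_right v hspanE hxmem
    rw [hrv, ← Submodule.map_span] at hx
    obtain ⟨y, hy, hyx⟩ := hx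
    rwa [show y = x from Subtype.ext hyx] at hy
  haveI : Module.Finite ↥Kab ↥W := ⟨hwspan ▸ Submodule.fg_span (Set.finite_range w)⟩
  have hled : finrank ↥Kab ↥W ≤ d := by
    have := finrank_le_of_span_eq_top hwspan
    simpa using this
  have key : finrank ↥Kab ↥W = d := by
    rcases Nat.lt_or_ge (finrank ↥Kab ↥W) d with hlt | hge
    · exfalso
      have hnotind : ¬ LinearIndependent ↥Kab w := by
        intro h
        have := h.fintype_card_le_finrank
        simp only [Fintype.card_fin] at this
        omega
      obtain ⟨g, hgsum, i0, hgi0⟩ := Fintype.not_linearIndependent_iff.1 hnotind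
      obtain ⟨tE, htEfin, htEsub, htEadj⟩ := my_fg E
      have htE' : tE ⊆ (Kab : Set Ω) := htEsub.trans (fun x hx => hx.2)
      set s : Set ↥Kab := (Subtype.val ⁻¹' tE) ∪ Set.range g with hs
      haveI : Finite s := by
        apply Set.Finite.union
        · exact Set.Finite.preimage (Subtype.val_injective.injOn) htEfin
        · exact Set.finite_range g
      set M₁ := FiniteGaloisIntermediateField.adjoin K s with hM₁
      set M : IntermediateField K Ω := (M₁ : IntermediateField K ↥Kab).map Kab.val with hM
      have hMKab : M ≤ Kab := by
        rintro x ⟨y, hy, rfl⟩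
        exact y.2
      haveI : FiniteDimensional K ↥M :=
        LinearEquiv.finiteDimensional
          (equivMap (M₁ : IntermediateField K ↥Kab) Kab.val).toLinearEquiv
      haveI : IsGalois K ↥M :=
        IsGalois.of_algEquiv (equivMap (M₁ : IntermediateField K ↥Kab) Kab.val)
      have hEM : E ≤ M := by
        rw [← htEadj]
        apply adjoin_le_iff.2
        intro x hx
        have hxKab : x ∈ Kab := htE' hx
        refine ⟨⟨x, hxKab⟩, ?_, rfl⟩
        exact FiniteGaloisIntermediateField.subset_adjoin K s (Set.mem_union_left _ hx)
      have hgM : ∀ i, ((g i : Ω) : Ω) ∈ M := fun i =>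
        ⟨g i, FiniteGaloisIntermediateField.subset_adjoin K s
          (Set.mem_union_right _ ⟨i, rfl⟩), rfl⟩
      have hLM : L ⊓ M = E := by
        apply le_antisymm
        · rw [hE]
          exact inf_le_inf_left L hMKab
        · exact le_inf inf_le_left hEM
      have hr : relfinrank M (L ⊔ M) * finrank K ↥E = finrank K ↥L := by
        have h5 := my_lemE L M
        rwa [hLM] at h5
      have hrd : relfinrank M (L ⊔ M) = d := by
        have hpos : 0 < finrank K ↥E := finrank_pos
        apply Nat.eq_of_mul_eq_mul_right hpos
        rw [hr, ← hdim, mul_comm]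
      set W' := extendScalars (le_sup_right : M ≤ L ⊔ M) with hW'
      have hn' : relfinrank M (L ⊔ M) = finrank ↥M ↥W' :=
        relfinrank_eq_finrank_of_le le_sup_right
      have hvW' : ∀ i, v i ∈ W' := fun i => (le_sup_left : L ≤ L ⊔ M) (hvL i)
      set w' : Fin d → ↥W' := fun i => ⟨v i, hvW' i⟩ with hw'
      have hrv' : Set.range v = W'.val.toLinearMap '' Set.range w' := by
        rw [← Set.range_comp]
        rfl
      have hw'span : ⊤ ≤ Submodule.span ↥M (Set.range w') := by
        intro x _
        have hxmem : (x : Ω) ∈ (↑(L ⊔ M) : Set Ω) := x.2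
        have hx : (x : Ω) ∈ Submodule.span ↥M (Set.range v) :=
          my_span_family (E := E) (B := M) hEM v hspanE hxmem
        rw [hrv', ← Submodule.map_span] at hx
        obtain ⟨y, hy, hyx⟩ := hx
        rwa [show y = x from Subtype.ext hyx] at hy
      have hcard : Fintype.card (Fin d) = finrank ↥M ↥W' := by
        rw [Fintype.card_fin, ← hn', hrd]
      have hind : LinearIndependent ↥M w' :=
        linearIndependent_of_top_le_span_of_card_eq_finrank hw'span hcard
      set g' : Fin d → ↥M := fun i => ⟨(g i : Ω), hgM i⟩ with hg'
      have hcoeW : ∀ (c : ↥Kab) (x : ↥W), ((c • x : ↥W) : Ω) = (c : Ω) * (x : Ω) := by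
        intro c x
        rfl
      have hcoeW' : ∀ (c : ↥M) (x : ↥W'), ((c • x : ↥W') : Ω) = (c : Ω) * (x : Ω) := by
        intro c x
        rfl
      have hsumΩ : ∑ i, (g i : Ω) * v i = 0 := by
        have h6 : ((∑ i, g i • w i : ↥W) : Ω) = ∑ i, (g i : Ω) * v i := by
          show W.val (∑ i, g i • w i) = _
          rw [map_sum]
          rfl
        rw [hgsum] at h6
        simpa using h6.symm
      have hsum' : ∑ i, g' i • w' i = 0 := by
        apply Subtype.ext
        have h7 : ((∑ i, g' i • w' i : ↥W') : Ω) = ∑ i, (g i : Ω) * v i := by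
          show W'.val (∑ i, g' i • w' i) = _
          rw [map_sum]
          rfl
        rw [h7, hsumΩ]
        rfl
      have hzero := Fintype.linearIndependent_iff.1 hind g' hsum' i0
      apply hgi0
      have : ((g i0 : Ω)) = 0 := by
        have := congrArg (Subtype.val) hzero
        exact this
      exact Subtype.ext (by simpa using this)
    · exact le_antisymm hled hge
  rw [hn, key, mul_comm, hdim]

end LemA


/-- For a tower `K ⊆ F ⊆ L` with `L/K` finite and `K^ab/K` an abelian (Galois) extension,
`[L·K^ab : F·K^ab] = [L : F] · [F ∩ K^ab : K] / [L ∩ K^ab : K]`, stated multiplicatively. -/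
theorem degree_compositum_with_abelian_extension
    {K Ω : Type*} [Field K] [Field Ω] [Algebra K Ω] [IsAlgClosure K Ω]
    (F L Kab : IntermediateField K Ω)
    (hFL : F ≤ L) [FiniteDimensional K L]
    [IsGalois K Kab]
    (habelian : ∀ σ τ : Kab ≃ₐ[K] Kab, σ * τ = τ * σ) :
    IntermediateField.relfinrank (F ⊔ Kab) (L ⊔ Kab) * Module.finrank K ↥(L ⊓ Kab)
      = IntermediateField.relfinrank F L * Module.finrank K ↥(F ⊓ Kab) := by
  haveI : FiniteDimensional K ↥F :=
    FiniteDimensional.of_injective (inclusion hFL).toLinearMap (inclusion hFL).injective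
  have hAL : relfinrank Kab (L ⊔ Kab) * finrank K ↥(L ⊓ Kab) = finrank K ↥L := my_lemA L Kab
  have hAF : relfinrank Kab (F ⊔ Kab) * finrank K ↥(F ⊓ Kab) = finrank K ↥F := my_lemA F Kab
  have htower : relfinrank Kab (F ⊔ Kab) * relfinrank (F ⊔ Kab) (L ⊔ Kab)
      = relfinrank Kab (L ⊔ Kab) :=
    relfinrank_mul_relfinrank le_sup_right (sup_le_sup_right hFL Kab)
  have ht : finrank K ↥F * relfinrank F L = finrank K ↥L := finrank_bot_mul_relfinrank hFL
  have hnF : 0 < relfinrank Kab (F ⊔ Kab) := by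
    rcases Nat.eq_zero_or_pos (relfinrank Kab (F ⊔ Kab)) with h | h
    · rw [h, zero_mul] at hAF
      exact absurd hAF.symm (Module.finrank_pos (R := K) (M := ↥F)).ne'
    · exact h
  apply Nat.eq_of_mul_eq_mul_left hnF
  calc relfinrank Kab (F ⊔ Kab) *
        (relfinrank (F ⊔ Kab) (L ⊔ Kab) * finrank K ↥(L ⊓ Kab))
      = (relfinrank Kab (F ⊔ Kab) * relfinrank (F ⊔ Kab) (L ⊔ Kab))
          * finrank K ↥(L ⊓ Kab) := by ring
    _ = finrank K ↥L := by rw [htower, hAL]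
    _ = finrank K ↥F * relfinrank F L := ht.symm
    _ = (relfinrank Kab (F ⊔ Kab) * finrank K ↥(F ⊓ Kab)) * relfinrank F L := by rw [hAF]
    _ = relfinrank Kab (F ⊔ Kab) * (relfinrank F L * finrank K ↥(F ⊓ Kab)) := by ring
end

section
/- Let O be an order in an imaginary quadratic field and I ⊆ O a nonzero ideal. If the positive integer n generating I ∩ ℤ satisfies n > max(2, |O^×|/2), then the only unit ε ∈ O^× acting trivially on O/I (equivalently, with ε − 1 ∈ I) is ε = 1. -/
open Polynomial


section Aux
variable {K : Type*} [Field K] [Algebra ℚ K]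

lemma aux_no_real_root (hquad : Module.finrank ℚ K = 2)
    (himag : ∀ f : K →+* ℝ, False) (z : K) (hz : IsIntegral ℚ z)
    (hdeg : (minpoly ℚ z).natDegree = 2) (r : ℝ)
    (hr : Polynomial.aeval r (minpoly ℚ z) = 0) : False := by
  haveI : FiniteDimensional ℚ K := Module.finite_of_finrank_pos (by omega)
  set A := Algebra.adjoin ℚ ({z} : Set K) with hA
  let pb : PowerBasis ℚ A := Algebra.adjoin.powerBasis hz
  have hgen : minpoly ℚ pb.gen = minpoly ℚ z := by
    have h1 : algebraMap A K pb.gen = z := rfl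
    conv_rhs => rw [← h1]
    exact (minpoly.algHom_eq (Subalgebra.val A) Subtype.val_injective pb.gen).symm
  have htop : A = ⊤ := by
    apply Subalgebra.toSubmodule.injective
    apply Submodule.eq_top_of_finrank_eq
    have h1 : Module.finrank ℚ A = pb.dim := pb.finrank
    have hdim : pb.dim = (minpoly ℚ z).natDegree := rfl
    rw [hquad]
    show Module.finrank ℚ A = 2
    omega
  let f : A →ₐ[ℚ] ℝ := pb.lift r (by rw [hgen]; exact hr)
  let g : K →ₐ[ℚ] A :=
    ((Subalgebra.equivOfEq A ⊤ htop).symm.toAlgHom.comp Subalgebra.topEquiv.symm.toAlgHom)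
  exact himag (f.comp g).toRingHom

lemma aux_aeval_quad {R : Type*} [CommRing R] [Algebra ℤ R] {q : ℤ[X]} (hq : q.Monic)
    (h2 : q.natDegree = 2) (w : R) :
    Polynomial.aeval w q = w ^ 2 + (q.coeff 1 : R) * w + (q.coeff 0 : R) := by
  rw [Polynomial.aeval_eq_sum_range' (by omega : q.natDegree < 3)]
  have hc2 : q.coeff 2 = 1 := by rw [← h2]; exact hq.coeff_natDegree
  simp only [Finset.sum_range_succ, Finset.sum_range_zero, hc2, Algebra.smul_def, algebraMap_int_eq, eq_intCast]
  push_cast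
  ring

lemma aux_int_of_deg_one {x : K} (hx : IsIntegral ℤ x)
    (h : (minpoly ℤ x).natDegree = 1) : ∃ m : ℤ, x = (m : K) := by
  have hm := minpoly.monic hx
  have heq := hm.eq_X_add_C h
  have := minpoly.aeval ℤ x
  rw [heq] at this
  simp only [map_add, aeval_X, aeval_C] at this
  refine ⟨-(minpoly ℤ x).coeff 0, ?_⟩
  have : x + ((minpoly ℤ x).coeff 0 : K) = 0 := by
    simpa [algebraMap_int_eq] using this
  push_cast
  linear_combination this

lemma aux_pm_one {y : K} {m : ℤ} (hy : IsIntegral ℤ y)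
    (h : (m : K) * y = 1) : (m : K) = 1 ∨ (m : K) = -1 := by
  haveI : CharZero K := charZero_of_injective_algebraMap (algebraMap ℚ K).injective
  have hm0 : m ≠ 0 := by rintro rfl; simp at h
  have hy' : y = algebraMap ℚ K ((m : ℚ)⁻¹) := by
    have : (m : K) ≠ 0 := by exact_mod_cast (Int.cast_ne_zero (α := K)).mpr hm0
    rw [map_inv₀]
    rw [mul_comm] at h
    rw [eq_inv_of_mul_eq_one_left h]
    norm_num
  rw [hy'] at hy
  rw [isIntegral_algebraMap_iff (algebraMap ℚ K).injective] at hy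
  obtain ⟨z, hz⟩ := IsIntegrallyClosed.isIntegral_iff.mp hy
  have hmz : m * z = 1 := by
    have : ((m * z : ℤ) : ℚ) = 1 := by
      push_cast
      rw [show ((z : ℚ)) = (m : ℚ)⁻¹ from hz]
      field_simp
    exact_mod_cast this
  rcases Int.isUnit_iff.mp (IsUnit.of_mul_eq_one z hmz) with h1 | h1 <;>
    [left; right] <;> rw [h1] <;> norm_num

end Aux

lemma aux_unit_quadratic {K : Type*} [Field K] [Algebra ℚ K] (hquad : Module.finrank ℚ K = 2)
    (himag : ∀ f : K →+* ℝ, False) (x y : K)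
    (hx : IsIntegral ℤ x) (hy : IsIntegral ℤ y) (hxy : x * y = 1) :
    (x = 1 ∨ x = -1) ∨ ∃ c : ℤ, c ^ 2 ≤ 1 ∧ x ^ 2 + (c : K) * x + 1 = 0 := by
  haveI : CharZero K := charZero_of_injective_algebraMap (algebraMap ℚ K).injective
  haveI : FiniteDimensional ℚ K := Module.finite_of_finrank_pos (by omega)
  have hxQ : IsIntegral ℚ x := hx.tower_top
  have hyQ : IsIntegral ℚ y := hy.tower_top
  have hmapx : minpoly ℚ x = (minpoly ℤ x).map (algebraMap ℤ ℚ) :=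
    minpoly.isIntegrallyClosed_eq_field_fractions' ℚ hx
  have hmapy : minpoly ℚ y = (minpoly ℤ y).map (algebraMap ℤ ℚ) :=
    minpoly.isIntegrallyClosed_eq_field_fractions' ℚ hy
  have hdx : (minpoly ℤ x).natDegree ≤ 2 := by
    have h1 := minpoly.natDegree_le (A := ℚ) x
    rw [hquad, hmapx, natDegree_map_eq_of_injective (algebraMap ℤ ℚ).injective_int] at h1
    exact h1
  have hdy : (minpoly ℤ y).natDegree ≤ 2 := by
    have h1 := minpoly.natDegree_le (A := ℚ) y
    rw [hquad, hmapy, natDegree_map_eq_of_injective (algebraMap ℤ ℚ).injective_int] at h1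
    exact h1
  have hdx1 : 1 ≤ (minpoly ℤ x).natDegree := minpoly.natDegree_pos hx
  have hdy1 : 1 ≤ (minpoly ℤ y).natDegree := minpoly.natDegree_pos hy
  -- degree one case for x
  rcases eq_or_lt_of_le hdx1 with hdeg1 | hdeg2
  · obtain ⟨m, rfl⟩ := aux_int_of_deg_one hx hdeg1.symm
    exact Or.inl (aux_pm_one hy hxy)
  have hdegx : (minpoly ℤ x).natDegree = 2 := by omega
  have hdegQx : (minpoly ℚ x).natDegree = 2 := by
    rw [hmapx, natDegree_map_eq_of_injective (algebraMap ℤ ℚ).injective_int]; exact hdegx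
  -- degree one case for y
  rcases eq_or_lt_of_le hdy1 with hdeg1y | hdeg2y
  · obtain ⟨m, rfl⟩ := aux_int_of_deg_one hy hdeg1y.symm
    rcases aux_pm_one hx (by rw [mul_comm] at hxy; exact hxy) with h | h
    · left; left
      rw [h, mul_one] at hxy; exact hxy
    · left; right
      rw [h] at hxy; linear_combination -hxy
  have hdegy : (minpoly ℤ y).natDegree = 2 := by omega
  set c := (minpoly ℤ x).coeff 1 with hc_def
  set d := (minpoly ℤ x).coeff 0 with hd_def
  set c' := (minpoly ℤ y).coeff 1 with hc'_def
  set d' := (minpoly ℤ y).coeff 0 with hd'_def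
  have hrel : x ^ 2 + (c : K) * x + (d : K) = 0 := by
    have h0 := minpoly.aeval ℤ x
    rwa [aux_aeval_quad (minpoly.monic hx) hdegx] at h0
  have hrel' : y ^ 2 + (c' : K) * y + (d' : K) = 0 := by
    have h0 := minpoly.aeval ℤ y
    rwa [aux_aeval_quad (minpoly.monic hy) hdegy] at h0
  have h1 : 1 + (c' : K) * x + (d' : K) * x ^ 2 = 0 := by
    linear_combination x ^ 2 * hrel' - (1 + x * y + (c' : K) * x) * hxy
  have hcomb : ((c' - d' * c : ℤ) : K) * x = ((d' * d - 1 : ℤ) : K) := by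
    push_cast
    linear_combination h1 - (d' : K) * hrel
  by_cases hcc : c' - d' * c = 0
  swap
  · -- x is rational: contradiction with degree 2
    exfalso
    have hb : ((c' - d' * c : ℤ) : K) ≠ 0 := by
      exact_mod_cast (Int.cast_ne_zero (α := K)).mpr hcc
    have hx2 : x = algebraMap ℚ K (((d' * d - 1 : ℤ) : ℚ) / ((c' - d' * c : ℤ) : ℚ)) := by
      rw [map_div₀]
      rw [eq_div_iff (by
        simp only [map_intCast]
        exact_mod_cast (Int.cast_ne_zero (α := K)).mpr hcc)]
      simp only [map_intCast]
      linear_combination hcomb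
    have : (minpoly ℚ x).natDegree = 1 := by
      rw [hx2, minpoly.eq_X_sub_C, natDegree_X_sub_C]
    omega
  · -- d' * d = 1
    have hdd : d' * d = 1 := by
      have : ((d' * d - 1 : ℤ) : K) = 0 := by
        rw [← hcomb, hcc]; push_cast; ring
      have h0 : (d' * d - 1 : ℤ) = 0 := by exact_mod_cast this
      omega
    have hd1 : d = 1 ∨ d = -1 := by
      rcases Int.isUnit_iff.mp (IsUnit.of_mul_eq_one d' (by rw [Int.mul_comm]; exact hdd)) with h | h
      · left; exact h
      · right; exact h
    -- helper: real root of minpoly via aeval computation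
    have haeval_real : ∀ r : ℝ, r ^ 2 + (c : ℝ) * r + (d : ℝ) = 0 →
        Polynomial.aeval r (minpoly ℚ x) = 0 := by
      intro r hr
      rw [hmapx]
      rw [aeval_map_algebraMap]
      rw [aux_aeval_quad (minpoly.monic hx) hdegx]
      exact hr
    rcases hd1 with hd1 | hd1
    · -- d = 1
      by_cases hcsmall : c ^ 2 ≤ 1
      · right
        refine ⟨c, hcsmall, ?_⟩
        rw [hd1] at hrel; push_cast at hrel; linear_combination hrel
      · exfalso
        push_neg at hcsmall
        have h4 : 4 ≤ c ^ 2 := by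
          rcases le_or_gt (|c|) 1 with hle | hlt
          · exfalso; nlinarith [sq_abs c, abs_nonneg c]
          · have h2le : 2 ≤ |c| := by
              have := Int.lt_iff_add_one_le.mp hlt
              omega
            nlinarith [sq_abs c, abs_nonneg c]
        set s := Real.sqrt ((c : ℝ) ^ 2 - 4) with hs_def
        have hs : s ^ 2 = (c : ℝ) ^ 2 - 4 := Real.sq_sqrt (by
          have : (4 : ℝ) ≤ (c : ℝ) ^ 2 := by exact_mod_cast h4
          linarith)
        refine aux_no_real_root hquad himag x hxQ hdegQx ((-(c : ℝ) + s) / 2) ?_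
        apply haeval_real
        rw [hd1]; push_cast
        linear_combination hs / 4
    · -- d = -1 : always a real root
      exfalso
      set s := Real.sqrt ((c : ℝ) ^ 2 + 4) with hs_def
      have hs : s ^ 2 = (c : ℝ) ^ 2 + 4 := Real.sq_sqrt (by positivity)
      refine aux_no_real_root hquad himag x hxQ hdegQx ((-(c : ℝ) + s) / 2) ?_
      apply haeval_real
      rw [hd1]; push_cast
      linear_combination hs / 4

/-- Let `O` be an order in an imaginary quadratic field `K` and `I ⊆ O` a nonzero ideal with
`I ∩ ℤ = nℤ` for `n > max(2, |O^×|/2)`. Then the only unit `ε ∈ O^×` with `ε - 1 ∈ I`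
is `ε = 1`. -/
theorem unit_acting_trivially_on_quotient_is_one
    {K : Type*} [Field K] [Algebra ℚ K]
    (hquad : Module.finrank ℚ K = 2)
    (himag : ∀ f : K →+* ℝ, False)
    (O : Subring K) (hfree : Module.Free ℤ O) (hrank : Module.finrank ℤ O = 2)
    (I : Ideal O) (hI : I ≠ ⊥) (n : ℕ)
    (hn : ∀ m : ℤ, ((m : O) ∈ I ↔ (n : ℤ) ∣ m))
    (hbig : n > max 2 (Nat.card Oˣ / 2)) :
    ∀ ε : Oˣ, (ε : O) - 1 ∈ I → ε = 1 := by
  intro ε hε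
  haveI := hfree
  haveI : Module.Finite ℤ O := Module.finite_of_finrank_pos (by rw [hrank]; norm_num)
  haveI : CharZero K := charZero_of_injective_algebraMap (algebraMap ℚ K).injective
  have hint : ∀ z : O, IsIntegral ℤ (z : K) := fun z =>
    (IsIntegral.of_finite ℤ z).map (O.subtype.toIntAlgHom)
  have hcoe : ∀ u : Oˣ, (((u : Oˣ) : O) : K) * (((u⁻¹ : Oˣ) : O) : K) = 1 := by
    intro u
    have h1 : ((u : O) * ((u⁻¹ : Oˣ) : O) : O) = 1 := u.mul_inv
    have := congrArg (Subtype.val : O → K) h1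
    push_cast at this
    exact this
  have key : ∀ u : Oˣ, ((((u : Oˣ) : O) : K) = 1 ∨ (((u : Oˣ) : O) : K) = -1) ∨
      ∃ c : ℤ, c ^ 2 ≤ 1 ∧ (((u : Oˣ) : O) : K) ^ 2 + (c : K) * (((u : Oˣ) : O) : K) + 1 = 0 :=
    fun u => aux_unit_quadratic hquad himag _ _ (hint _) (hint _) (hcoe u)
  -- every unit is a 12th root of unity
  have h12 : ∀ u : Oˣ, (((u : Oˣ) : O) : K) ^ 12 = 1 := by
    intro u
    rcases key u with (h | h) | ⟨c, hc2, hrel⟩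
    · rw [h]; norm_num
    · rw [h]; norm_num
    · have hcb : -1 ≤ c ∧ c ≤ 1 := by constructor <;> nlinarith
      obtain ⟨hcl, hcr⟩ := hcb
      interval_cases c
      · have h3 : (((u : Oˣ) : O) : K) ^ 3 = -1 := by push_cast at hrel; linear_combination ((((u : Oˣ) : O) : K) + 1) * hrel
        rw [show (12 : ℕ) = 3 * 4 from rfl, pow_mul, h3]; norm_num
      · have h2 : (((u : Oˣ) : O) : K) ^ 2 = -1 := by push_cast at hrel; linear_combination hrel
        rw [show (12 : ℕ) = 2 * 6 from rfl, pow_mul, h2]; norm_num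
      · have h3 : (((u : Oˣ) : O) : K) ^ 3 = 1 := by push_cast at hrel; linear_combination ((((u : Oˣ) : O) : K) - 1) * hrel
        rw [show (12 : ℕ) = 3 * 4 from rfl, pow_mul, h3]; norm_num
  haveI hfinU : Finite Oˣ := by
    have hne : (X ^ 12 - C (1 : K)) ≠ 0 :=
      (Polynomial.monic_X_pow_sub_C (1 : K) (by norm_num)).ne_zero
    have hfin : {x : K | x ^ 12 = 1}.Finite := by
      apply Set.Finite.subset (Polynomial.finite_setOf_isRoot hne)
      intro x hx
      rw [Set.mem_setOf_eq] at hx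
      simp only [Set.mem_setOf_eq, IsRoot, eval_sub, eval_pow, eval_X, eval_C, hx, sub_self]
    haveI := hfin.to_subtype
    apply Finite.of_injective (fun u : Oˣ => (⟨(((u : Oˣ) : O) : K), h12 u⟩ : {x : K | x ^ 12 = 1}))
    intro a b hab
    exact Units.ext (Subtype.ext (by simpa using hab))
  have hn2 : 2 < n := lt_of_le_of_lt (le_max_left _ _) hbig
  rcases key ε with (h1 | h1) | ⟨c, hc2, hrel⟩
  · apply Units.ext
    exact Subtype.ext h1
  · exfalso
    have he : ((ε : Oˣ) : O) - 1 = ((-2 : ℤ) : O) := by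
      apply Subtype.ext
      push_cast
      rw [h1]; norm_cast
    rw [he] at hε
    have hdvd := (hn (-2)).mp hε
    have h2 : (n : ℤ) ∣ 2 := (dvd_neg).mp hdvd
    have := Int.le_of_dvd (by norm_num) h2
    omega
  · -- quadratic case
    exfalso
    have hxy := hcoe ε
    have hx0 : (((ε : Oˣ) : O) : K) ≠ 0 := by
      intro h0
      rw [h0, zero_mul] at hxy
      exact zero_ne_one hxy
    have hy : (((ε⁻¹ : Oˣ) : O) : K) = -(((ε : Oˣ) : O) : K) - (c : K) := by
      apply mul_left_cancel₀ hx0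
      rw [hxy]
      linear_combination hrel
    have hval : ((ε : O) - 1) * (((ε⁻¹ : Oˣ) : O) - 1) = ((2 + c : ℤ) : O) := by
      apply Subtype.ext
      push_cast
      rw [hy]
      have h2c : ((2 : O) : K) = 2 := by norm_cast
      rw [h2c]
      linear_combination -hrel
    have hprod : ((ε : O) - 1) * (((ε⁻¹ : Oˣ) : O) - 1) ∈ I := I.mul_mem_right _ hε
    rw [hval] at hprod
    have hdvd : (n : ℤ) ∣ (2 + c) := (hn (2 + c)).mp hprod
    have hcb : -1 ≤ c ∧ c ≤ 1 := by constructor <;> nlinarith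
    have hle : (n : ℤ) ≤ 2 + c := Int.le_of_dvd (by omega) hdvd
    have hn3 : n = 3 ∧ c = 1 := by omega
    obtain ⟨hn3, hc1⟩ := hn3
    rw [hc1] at hrel
    push_cast at hrel
    -- hrel : x^2 + x + 1 = 0
    have hx3 : (((ε : Oˣ) : O) : K) ^ 3 = 1 := by
      linear_combination ((((ε : Oˣ) : O) : K) - 1) * hrel
    have hu6 : (-ε) ^ 6 = 1 := by
      apply Units.ext
      apply Subtype.ext
      push_cast
      rw [show (-(((ε : Oˣ) : O) : K)) ^ 6 = ((((ε : Oˣ) : O) : K) ^ 3) ^ 2 by ring, hx3]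
      norm_num
    have hu2 : (-ε) ^ 2 ≠ 1 := by
      intro h
      have hval2 := congrArg (fun u : Oˣ => ((u : O) : K)) h
      push_cast at hval2
      -- hval2 : x^2 = 1 (as (-x)^2)
      have h3 : (3 : K) = 0 := by
        linear_combination ((((ε : Oˣ) : O) : K) - 1) * hval2 - ((((ε : Oˣ) : O) : K) - 2) * hrel
      norm_num at h3
    have hu3 : (-ε) ^ 3 ≠ 1 := by
      intro h
      have hval3 := congrArg (fun u : Oˣ => ((u : O) : K)) h
      push_cast at hval3
      have h2 : (2 : K) = 0 := by
        linear_combination -hval3 - hx3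
      norm_num at h2
    have hdvd6 : orderOf (-ε) ∣ 6 := orderOf_dvd_of_pow_eq_one hu6
    have hord : orderOf (-ε) = 6 := by
      have hpos : 0 < orderOf (-ε) := orderOf_pos _
      have hle6 : orderOf (-ε) ≤ 6 := Nat.le_of_dvd (by norm_num) hdvd6
      have h2d : ¬ orderOf (-ε) ∣ 2 := fun hd => hu2 (orderOf_dvd_iff_pow_eq_one.mp hd)
      have h3d : ¬ orderOf (-ε) ∣ 3 := fun hd => hu3 (orderOf_dvd_iff_pow_eq_one.mp hd)
      interval_cases h : orderOf (-ε) <;> omega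
    have hdvdcard : 6 ∣ Nat.card Oˣ := hord ▸ orderOf_dvd_natCard (-ε)
    have hpos : 0 < Nat.card Oˣ := Nat.card_pos
    have h6le : 6 ≤ Nat.card Oˣ := Nat.le_of_dvd hpos hdvdcard
    have : 3 ≤ Nat.card Oˣ / 2 := by omega
    omega
end
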